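/- arXiv:math/0612679 — 2 statements merged into one kernel-verified Lean document; each statement's English description precedes it below -/
import Mathlib

section
/- Let s and n be positive integers and 0 ≤ k ≤ n. Let t ≥ 2 be a divisor of sn+1 and let ω ∈ ℂ be a primitive t-th root of unity. Then [[sn+k, k]]_ω · [[n, k]]_ω equals C((sn+1+k)/t − 1, k/t) · C(⌊(n−1)/t⌋, k/t) if t divides k, and equals 0 otherwise. -/
open Filter Topology

/-- The q-integer `[m]_q = 1 + q + ... + q^(m-1)`. -/
noncomputable def qInt (q : ℂ) (m : ℕ) : ℂ := ∑ i ∈ Finset.range m, q ^ i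

/-- The Gaussian binomial coefficient `[[m, k]]` as a polynomial over ℂ,
defined by the Pascal recurrence `[[m+1, k+1]] = [[m, k]] + q^(k+1)·[[m, k+1]]`;
it is the unique polynomial with `[[m,k]]·[k]!_q·[m−k]!_q = [m]!_q` for `0 ≤ k ≤ m`,
and it vanishes for `k > m`. -/
noncomputable def gbPoly : ℕ → ℕ → Polynomial ℂ
  | _, 0 => 1
  | 0, _ + 1 => 0
  | m + 1, k + 1 => gbPoly m k + Polynomial.X ^ (k + 1) * gbPoly m (k + 1)

/-- Evaluation of the Gaussian binomial `[[m, k]]` at `q : ℂ`. -/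
noncomputable def gb (m k : ℕ) (q : ℂ) : ℂ := (gbPoly m k).eval q

/-- Gaussian binomial with integer lower index (zero for negative lower index). -/
noncomputable def gbZ (m : ℕ) (k : ℤ) (q : ℂ) : ℂ := if 0 ≤ k then gb m k.toNat q else 0

/-- Binomial coefficient with integer lower index (zero for negative lower index). -/
def chooseZ (a : ℕ) (b : ℤ) : ℕ := if 0 ≤ b then a.choose b.toNat else 0

/-- `x` lies strictly inside the open counterclockwise arc from `a` to `b`. -/
def InArc {N : ℕ} (a b x : ZMod N) : Prop :=
  0 < (x - a).val ∧ (x - a).val < (b - a).val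

/-- An unordered pair of vertices of the `N`-gon is a diagonal. -/
def IsDiagonal {N : ℕ} (D : Sym2 (ZMod N)) : Prop :=
  ∃ a b : ZMod N, D = s(a, b) ∧ b ≠ a ∧ b ≠ a + 1 ∧ b ≠ a - 1

/-- Two chords cross: exactly one endpoint of the second lies in the open arc
from `a` to `b`, the other in the open arc from `b` to `a`. -/
def Crosses {N : ℕ} (D E : Sym2 (ZMod N)) : Prop :=
  ∃ a b c d : ZMod N, D = s(a, b) ∧ E = s(c, d) ∧
    InArc a b c ∧ InArc b a d

/-- A diagonal `{a,b}` is `s`-divisible: the representative of `b − a` is ≡ 1 (mod s). -/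
def SDivisible (s : ℕ) {N : ℕ} (D : Sym2 (ZMod N)) : Prop :=
  ∃ a b : ZMod N, D = s(a, b) ∧ (b - a).val % s = 1 % s

/-- Rotation of a chord by `r`. -/
def rotChord {N : ℕ} (r : ZMod N) (D : Sym2 (ZMod N)) : Sym2 (ZMod N) :=
  Sym2.map (· + r) D

/-- An `s`-divisible dissection of the `N`-gon using `k` noncrossing diagonals. -/
def IsDissection (s N k : ℕ) (π : Finset (Sym2 (ZMod N))) : Prop :=
  π.card = k ∧ (∀ D ∈ π, IsDiagonal D ∧ SDivisible s D) ∧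
    ∀ D ∈ π, ∀ E ∈ π, D ≠ E → ¬ Crosses D E

/-- Rotation of a dissection by `r`. -/
def rotDissection {N : ℕ} (r : ZMod N) (π : Finset (Sym2 (ZMod N))) :
    Finset (Sym2 (ZMod N)) := π.image (rotChord r)

/-- A diameter of the `(2sn+2)`-gon. -/
def IsDiameter (s n : ℕ) (D : Sym2 (ZMod (2*s*n+2))) : Prop :=
  ∃ a : ZMod (2*s*n+2), D = s(a, a + ((s*n+1 : ℕ) : ZMod (2*s*n+2)))

/-- Antipodal copy of a chord in the `(2sn+2)`-gon. -/
def antipodal (s n : ℕ) (D : Sym2 (ZMod (2*s*n+2))) : Sym2 (ZMod (2*s*n+2)) :=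
  rotChord ((s*n+1 : ℕ) : ZMod (2*s*n+2)) D

/-- A B-diagonal: a diameter, or a non-diameter `s`-divisible diagonal together
with its antipodal copy. -/
def IsBDiagonal (s n : ℕ) (B : Finset (Sym2 (ZMod (2*s*n+2)))) : Prop :=
  (∃ D, IsDiameter s n D ∧ B = {D}) ∨
  (∃ D, IsDiagonal D ∧ SDivisible s D ∧ ¬ IsDiameter s n D ∧ B = {D, antipodal s n D})

/-- A `k`-element set of pairwise noncrossing B-diagonals. -/
def IsBFace (s n k : ℕ) (π : Finset (Finset (Sym2 (ZMod (2*s*n+2))))) : Prop :=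
  π.card = k ∧ (∀ B ∈ π, IsBDiagonal s n B) ∧
    ∀ B₁ ∈ π, ∀ B₂ ∈ π, ∀ D ∈ B₁, ∀ E ∈ B₂, D ≠ E → ¬ Crosses D E

/-- Rotation of a set of B-diagonals by `r`. -/
def rotBFace (s n : ℕ) (r : ZMod (2*s*n+2)) (π : Finset (Finset (Sym2 (ZMod (2*s*n+2))))) :
    Finset (Finset (Sym2 (ZMod (2*s*n+2)))) := π.image (fun B => B.image (rotChord r))

/-- The edges of a graph on the vertices of the `N`-gon are pairwise noncrossing chords. -/
def NoncrossingEdges {N : ℕ} (G : SimpleGraph (ZMod N)) : Prop :=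
  ∀ e ∈ G.edgeSet, ∀ f ∈ G.edgeSet, e ≠ f → ¬ Crosses e f

/-- Rotation of a graph on `ZMod N` by `r`. -/
def rotGraph {N : ℕ} (r : ZMod N) (G : SimpleGraph (ZMod N)) : SimpleGraph (ZMod N) :=
  G.map (Equiv.addRight r).toEmbedding

lemma gbPoly_zero (m : ℕ) : gbPoly m 0 = 1 := by cases m <;> rfl

lemma gbPoly_of_lt : ∀ m k : ℕ, m < k → gbPoly m k = 0 := by
  intro m
  induction m with
  | zero => intro k hk; match k, hk with | k+1, _ => rfl
  | succ m ih =>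
    intro k hk
    match k, hk with
    | k+1, hk =>
      show gbPoly m k + Polynomial.X ^ (k + 1) * gbPoly m (k + 1) = 0
      rw [ih k (by omega), ih (k+1) (by omega), mul_zero, add_zero]

lemma gbPoly_self : ∀ m : ℕ, gbPoly m m = 1 := by
  intro m
  induction m with
  | zero => rfl
  | succ m ih =>
    show gbPoly m m + Polynomial.X ^ (m + 1) * gbPoly m (m + 1) = 1
    rw [ih, gbPoly_of_lt m (m+1) (by omega), mul_zero, add_zero]

noncomputable def qIntP (m : ℕ) : Polynomial ℂ := ∑ i ∈ Finset.range m, Polynomial.X ^ i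
noncomputable def qFactP (m : ℕ) : Polynomial ℂ := ∏ j ∈ Finset.range m, qIntP (j+1)

lemma qIntP_add (a b : ℕ) : qIntP (a + b) = qIntP a + Polynomial.X ^ a * qIntP b := by
  unfold qIntP
  rw [Finset.sum_range_add, Finset.mul_sum]
  simp [pow_add]

lemma qFactP_succ (m : ℕ) : qFactP (m+1) = qFactP m * qIntP (m+1) := by
  unfold qFactP; rw [Finset.prod_range_succ]

lemma gb_fact : ∀ m k : ℕ, k ≤ m → gbPoly m k * qFactP k * qFactP (m - k) = qFactP m := by
  intro m
  induction m with
  | zero => intro k hk; interval_cases k; simp [gbPoly_zero, qFactP]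
  | succ m ih =>
    intro k hk
    match k with
    | 0 => simp [gbPoly_zero, qFactP]
    | k+1 =>
      rcases eq_or_lt_of_le hk with h | h
      · rw [h, gbPoly_self, Nat.sub_self]
        simp [qFactP]
      · have hkm : k + 1 ≤ m := by omega
        have h1 : m + 1 - (k+1) = (m - (k+1)) + 1 := by omega
        show (gbPoly m k + Polynomial.X ^ (k + 1) * gbPoly m (k + 1)) * qFactP (k+1) *
            qFactP (m + 1 - (k+1)) = qFactP (m+1)
        rw [h1, qFactP_succ (m - (k+1)), qFactP_succ k, qFactP_succ m]
        have e1 := ih k (by omega)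
        have e2 := ih (k+1) hkm
        have h2 : m - k = (m - (k+1)) + 1 := by omega
        rw [h2, qFactP_succ (m - (k+1))] at e1
        have h3 : m - (k+1) + 1 = m - k := by omega
        have h4 : (k+1) + (m - k) = m + 1 := by omega
        have key : qIntP (k+1) + Polynomial.X ^ (k+1) * qIntP (m - k) = qIntP (m+1) := by
          rw [← qIntP_add, h4]
        calc (gbPoly m k + Polynomial.X ^ (k + 1) * gbPoly m (k + 1)) *
              (qFactP k * qIntP (k+1)) * (qFactP (m - (k+1)) * qIntP (m - (k+1) + 1))
            = (gbPoly m k * qFactP k * (qFactP (m - (k+1)) * qIntP (m - (k+1) + 1))) * qIntP (k+1)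
              + Polynomial.X ^ (k+1) * (gbPoly m (k+1) * qFactP (k+1) * qFactP (m - (k+1)))
                * qIntP (m - (k+1) + 1) := by rw [qFactP_succ k]; ring
          _ = qFactP m * qIntP (k+1) + Polynomial.X ^ (k+1) * qFactP m * qIntP (m - k) := by
              rw [h3] at e1; rw [h3, e1, e2]
          _ = qFactP m * qIntP (m+1) := by rw [← key]; ring

section roots
variable (t : ℕ) (ω : ℂ) (ht : 2 ≤ t) (hω1 : ω ^ t = 1)
  (hω2 : ∀ e : ℕ, 0 < e → e < t → ω ^ e ≠ 1)

include ht hω1 hω2 in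
lemma qIntP_eval_ne (i : ℕ) (hi0 : 0 < i) (hit : i < t) : (qIntP i).eval ω ≠ 0 := by
  intro h
  have hg : (∑ j ∈ Finset.range i, ω ^ j) * (ω - 1) = ω ^ i - 1 := geom_sum_mul ω i
  have he : (qIntP i).eval ω = ∑ j ∈ Finset.range i, ω ^ j := by
    simp [qIntP]
  rw [he] at h
  rw [h, zero_mul] at hg
  exact hω2 i hi0 hit (sub_eq_zero.mp hg.symm)

include ht hω1 hω2 in
lemma qIntP_eval_t : (qIntP t).eval ω = 0 := by
  have hg : (∑ j ∈ Finset.range t, ω ^ j) * (ω - 1) = ω ^ t - 1 := geom_sum_mul ω t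
  rw [hω1, sub_self] at hg
  have hω : ω - 1 ≠ 0 := by
    intro h
    exact hω2 1 one_pos (by omega) (by rw [pow_one]; exact sub_eq_zero.mp h)
  have := mul_eq_zero.mp hg
  simp [qIntP]
  tauto

include ht hω1 hω2 in
lemma gb_t_zero (j : ℕ) (hj0 : 0 < j) (hjt : j < t) : gb t j ω = 0 := by
  have hfi := gb_fact t j (le_of_lt hjt)
  have := congrArg (Polynomial.eval ω) hfi
  simp only [Polynomial.eval_mul] at this
  have hfe : ∀ m : ℕ, (qFactP m).eval ω = ∏ i ∈ Finset.range m, (qIntP (i+1)).eval ω := by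
    intro m; simp [qFactP, Polynomial.eval_prod]
  rw [hfe, hfe, hfe] at this
  have hl1 : ∏ i ∈ Finset.range j, (qIntP (i+1)).eval ω ≠ 0 := by
    apply Finset.prod_ne_zero_iff.mpr
    intro i hi
    exact qIntP_eval_ne t ω ht hω1 hω2 (i+1) (by omega) (by simp [Finset.mem_range] at hi; omega)
  have hl2 : ∏ i ∈ Finset.range (t - j), (qIntP (i+1)).eval ω ≠ 0 := by
    apply Finset.prod_ne_zero_iff.mpr
    intro i hi
    exact qIntP_eval_ne t ω ht hω1 hω2 (i+1) (by omega) (by simp [Finset.mem_range] at hi; omega)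
  have hrhs : ∏ i ∈ Finset.range t, (qIntP (i+1)).eval ω = 0 := by
    apply Finset.prod_eq_zero (Finset.mem_range.mpr (show t - 1 < t by omega))
    show (qIntP (t - 1 + 1)).eval ω = 0
    rw [Nat.sub_add_cancel (by omega)]
    exact qIntP_eval_t t ω ht hω1 hω2
  rw [hrhs] at this
  have := mul_eq_zero.mp this
  rcases this with h | h
  · rcases mul_eq_zero.mp h with h' | h'
    · exact h'
    · exact absurd h' hl1
  · exact absurd h hl2

include ht hω1 hω2 in
lemma qLucas : ∀ m k : ℕ, gb m k ω =
    (Nat.choose (m / t) (k / t) : ℂ) * gb (m % t) (k % t) ω := by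
  have ht0 : 0 < t := by omega
  -- division splitting helper
  have split : ∀ x : ℕ,
      ((x+1) % t = x % t + 1 ∧ (x+1)/t = x/t ∧ x % t + 1 < t) ∨
      ((x+1) % t = 0 ∧ (x+1)/t = x/t + 1 ∧ x % t + 1 = t) := by
    intro x
    have hx := Nat.div_add_mod x t
    have hxlt : x % t < t := Nat.mod_lt _ ht0
    rcases lt_or_eq_of_le (Nat.succ_le_of_lt hxlt) with h | h
    · left
      have hx1 : x + 1 = (x % t + 1) + t * (x / t) := by omega
      refine ⟨?_, ?_, h⟩
      · rw [hx1, Nat.add_mul_mod_self_left, Nat.mod_eq_of_lt h]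
      · rw [hx1, Nat.add_mul_div_left _ _ ht0, Nat.div_eq_of_lt h, zero_add]
    · right
      have hx1 : x + 1 = t * (x / t + 1) := by rw [Nat.mul_add, Nat.mul_one]; omega
      refine ⟨?_, ?_, h⟩
      · rw [hx1, Nat.mul_mod_right]
      · rw [hx1, Nat.mul_div_cancel_left _ ht0]
  intro m
  induction m with
  | zero =>
    intro k
    match k with
    | 0 => simp [gb, gbPoly_zero]
    | k+1 =>
      rcases Nat.eq_zero_or_pos ((k+1) % t) with h | h
      · have hd : t ∣ k + 1 := Nat.dvd_of_mod_eq_zero h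
        have h1 : 0 < (k+1)/t := Nat.div_pos (Nat.le_of_dvd (by omega) hd) ht0
        rw [show gb 0 (k+1) ω = 0 by simp [gb, gbPoly_of_lt 0 (k+1) (by omega)]]
        rw [Nat.zero_div, Nat.choose_eq_zero_of_lt h1]
        simp
      · rw [show gb 0 (k+1) ω = 0 by simp [gb, gbPoly_of_lt 0 (k+1) (by omega)]]
        rw [Nat.zero_mod, show gb 0 ((k+1) % t) ω = 0 by
          simp [gb, gbPoly_of_lt 0 ((k+1) % t) h]]
        ring
  | succ m ih =>
    intro k
    match k with
    | 0 => simp [gb, gbPoly_zero]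
    | k+1 =>
      have hrec : gb (m+1) (k+1) ω = gb m k ω + ω^(k+1) * gb m (k+1) ω := by
        show (gbPoly m k + Polynomial.X ^ (k + 1) * gbPoly m (k + 1)).eval ω = _
        simp [gb]
      have hωk : ω ^ (k+1) = ω ^ ((k+1) % t) := by
        conv_lhs => rw [← Nat.div_add_mod (k+1) t]
        rw [pow_add, pow_mul, hω1, one_pow, one_mul]
      have hb : m % t < t := Nat.mod_lt _ ht0
      have hr : k % t < t := Nat.mod_lt _ ht0
      rw [hrec, ih k, ih (k+1)]
      rcases split m with ⟨hm1, hm2, hm3⟩ | ⟨hm1, hm2, hm3⟩ <;>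
        rcases split k with ⟨hk1, hk2, hk3⟩ | ⟨hk1, hk2, hk3⟩
      · -- b+1 < t, r+1 < t
        rw [hm1, hm2, hk1, hk2, hωk, hk1]
        have : gb (m % t + 1) (k % t + 1) ω
            = gb (m % t) (k % t) ω + ω^(k % t + 1) * gb (m % t) (k % t + 1) ω := by
          show (gbPoly (m % t) (k % t) + Polynomial.X ^ (k % t + 1) * gbPoly (m % t) (k % t + 1)).eval ω = _
          simp [gb]
        rw [this]; ring
      · -- b+1 < t, r+1 = t
        rw [hm1, hm2, hk1, hk2, hωk, hk1, pow_zero, one_mul]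
        rw [show gb (m % t) (k % t) ω = 0 by
          simp [gb, gbPoly_of_lt (m % t) (k % t) (by omega)]]
        rw [show gb (m % t + 1) 0 ω = 1 by simp [gb, gbPoly_zero]]
        rw [show gb (m % t) 0 ω = 1 by simp [gb, gbPoly_zero]]
        ring
      · -- b+1 = t, r+1 < t
        rw [hm1, hm2, hk1, hk2, hωk, hk1]
        rw [show gb 0 (k % t + 1) ω = 0 by
          simp [gb, gbPoly_of_lt 0 (k % t + 1) (by omega)]]
        have hgbt : gb (m % t + 1) (k % t + 1) ω = 0 := by
          rw [show m % t + 1 = t by omega]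
          exact gb_t_zero t ω ht hω1 hω2 _ (by omega) (by omega)
        have heq : gb (m % t + 1) (k % t + 1) ω
            = gb (m % t) (k % t) ω + ω^(k % t + 1) * gb (m % t) (k % t + 1) ω := by
          show (gbPoly (m % t) (k % t) + Polynomial.X ^ (k % t + 1) * gbPoly (m % t) (k % t + 1)).eval ω = _
          simp [gb]
        rw [heq] at hgbt
        rw [mul_zero]
        calc (↑(Nat.choose (m/t) (k/t)) : ℂ) * gb (m % t) (k % t) ω
              + ω^(k % t + 1) * ((Nat.choose (m/t) (k/t) : ℂ) * gb (m % t) (k % t + 1) ω)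
            = (Nat.choose (m/t) (k/t) : ℂ) *
              (gb (m % t) (k % t) ω + ω^(k % t + 1) * gb (m % t) (k % t + 1) ω) := by ring
          _ = 0 := by rw [hgbt, mul_zero]
      · -- b+1 = t, r+1 = t
        rw [hm1, hm2, hk1, hk2, hωk, hk1, pow_zero, one_mul]
        rw [show gb 0 0 ω = 1 by simp [gb, gbPoly_zero]]
        rw [show gb (m % t) 0 ω = 1 by simp [gb, gbPoly_zero]]
        rw [show gb (m % t) (k % t) ω = 1 by
          rw [show k % t = m % t by omega]; simp [gb, gbPoly_self]]
        rw [Nat.choose_succ_succ (m/t) (k/t)]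
        push_cast
        ring

end roots


/-- For `t ≥ 2` a divisor of `sn+1` and `ω` a primitive `t`-th root of
unity, `[[sn+k,k]]_ω·[[n,k]]_ω = C((sn+1+k)/t − 1, k/t)·C(⌊(n−1)/t⌋, k/t)` if `t ∣ k`,
and `0` otherwise. -/
theorem stmt10 (s n k t : ℕ) (hs : 0 < s) (hn : 0 < n) (hk : k ≤ n)
    (ht : 2 ≤ t) (htdvd : t ∣ (s * n + 1)) (ω : ℂ)
    (hω1 : ω ^ t = 1) (hω2 : ∀ e : ℕ, 0 < e → e < t → ω ^ e ≠ 1) :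
    gb (s * n + k) k ω * gb n k ω
      = if t ∣ k then
          ((Nat.choose ((s * n + 1 + k) / t - 1) (k / t) *
            Nat.choose ((n - 1) / t) (k / t) : ℕ) : ℂ)
        else 0 := by
  have ht0 : 0 < t := by omega
  rw [qLucas t ω ht hω1 hω2 (s*n+k) k, qLucas t ω ht hω1 hω2 n k]
  by_cases hdk : t ∣ k
  · rw [if_pos hdk]
    have hk0 : k % t = 0 := by
      obtain ⟨c, hc⟩ := hdk; rw [hc]; exact Nat.mul_mod_right t c
    rw [hk0]
    rw [show gb ((s*n+k) % t) 0 ω = 1 by simp [gb, gbPoly_zero]]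
    rw [show gb (n % t) 0 ω = 1 by simp [gb, gbPoly_zero]]
    -- (s*n+k)/t = (s*n+1+k)/t - 1
    have hd2 : t ∣ s * n + 1 + k := by
      exact Dvd.dvd.add htdvd hdk
    obtain ⟨M, hM⟩ := hd2
    have hM1 : 1 ≤ M := by nlinarith [Nat.le_of_dvd (by omega) htdvd]
    have hdiv1 : (s * n + k) / t = M - 1 := by
      have : s * n + k = (t - 1) + t * (M - 1) := by
        have h5 : t * M = t * (M-1) + t := by
          have h6 : t * 1 ≤ t * M := Nat.mul_le_mul_left t hM1
          rw [Nat.mul_sub, Nat.mul_one]; omega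
        omega
      rw [this, Nat.add_mul_div_left _ _ ht0, Nat.div_eq_of_lt (by omega), zero_add]
    have hMt : (s * n + 1 + k) / t = M := by rw [hM, Nat.mul_div_cancel_left _ ht0]
    -- n / t = (n - 1) / t
    have hnt : ¬ t ∣ n := by
      intro h
      have h1 : t ∣ s * n := Dvd.dvd.mul_left h s
      have h2 : t ∣ 1 := by
        have := Nat.dvd_sub htdvd h1
        simpa using this
      have := Nat.le_of_dvd one_pos h2
      omega
    have hnm : 0 < n % t := Nat.pos_of_ne_zero (fun h => hnt (Nat.dvd_of_mod_eq_zero h))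
    have hdiv2 : n / t = (n - 1) / t := by
      obtain ⟨r, hrdef⟩ : ∃ r, n % t = r := ⟨_, rfl⟩
      have hrt : r < t := hrdef ▸ Nat.mod_lt n ht0
      have hr1 : 0 < r := hrdef ▸ hnm
      have hn1 : n - 1 = (r - 1) + t * (n / t) := by
        have := Nat.div_add_mod n t
        omega
      rw [hn1, Nat.add_mul_div_left _ _ ht0,
        Nat.div_eq_of_lt (show r - 1 < t by omega), zero_add]
    rw [hdiv1, hMt, hdiv2]
    push_cast
    ring
  · rw [if_neg hdk]
    have hr : 0 < k % t := Nat.pos_of_ne_zero (fun h => hdk (Nat.dvd_of_mod_eq_zero h))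
    have hk1 : 1 ≤ k := by
      rcases Nat.eq_zero_or_pos k with h | h
      · exact absurd (h ▸ dvd_zero t) hdk
      · exact h
    have hmod : (s * n + k) % t = k % t - 1 := by
      have h1 : s * n + k = (s * n + 1) + (k - 1) := by omega
      obtain ⟨d, hd⟩ := htdvd
      obtain ⟨r, hrdef⟩ : ∃ r, k % t = r := ⟨_, rfl⟩
      have hrt : r < t := hrdef ▸ Nat.mod_lt k ht0
      have hr1 : 0 < r := hrdef ▸ hr
      have h2 : k - 1 = (r - 1) + t * (k / t) := by
        have := Nat.div_add_mod k t
        omega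
      rw [hrdef, h1, hd, h2, add_comm (t * d), add_assoc, ← Nat.mul_add,
        Nat.add_mul_mod_self_left, Nat.mod_eq_of_lt (show r - 1 < t by omega)]
    rw [hmod]
    rw [show gb (k % t - 1) (k % t) ω = 0 by
      simp [gb, gbPoly_of_lt (k % t - 1) (k % t) (by omega)]]
    ring
end

section
/- Let s and n be positive integers and 0 ≤ k ≤ n. Let d ≥ 2 be a divisor of 2sn+2 and let ω ∈ ℂ be a primitive d-th root of unity. Then [[sn+k, k]]_{ω²} · [[n, k]]_{ω²} equals: C(sn+k, k)·C(n, k) if d = 2; C((sn+1+k)/d − 1, k/d)·C(⌊(n−1)/d⌋, k/d) if d ≥ 3 is odd and d divides k; C((2sn+2+2k)/d − 1, 2k/d)·C(⌊2(n−1)/d⌋, 2k/d) if d ≥ 4 is even and d divides 2k; and 0 otherwise. -/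
open Filter Topology

lemma gbPoly_succ (m k : ℕ) :
    gbPoly (m+1) (k+1) = gbPoly m k + Polynomial.X ^ (k+1) * gbPoly m (k+1) := rfl

lemma gb_zero (m : ℕ) (q : ℂ) : gb m 0 q = 1 := by simp [gb, gbPoly_zero]

lemma gb_pascal (m k : ℕ) (q : ℂ) :
    gb (m+1) (k+1) q = gb m k q + q^(k+1) * gb m (k+1) q := by
  simp [gb, gbPoly_succ]

lemma gb_of_lt : ∀ m k : ℕ, m < k → ∀ q : ℂ, gb m k q = 0 := by
  intro m
  induction m with
  | zero =>
    intro k hk q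
    obtain ⟨j, rfl⟩ : ∃ j, k = j + 1 := ⟨k-1, by omega⟩
    simp [gb, gbPoly]
  | succ m ih =>
    intro k hk q
    obtain ⟨j, rfl⟩ : ∃ j, k = j + 1 := ⟨k-1, by omega⟩
    rw [gb_pascal, ih j (by omega), ih (j+1) (by omega)]
    ring

lemma gb_self : ∀ m : ℕ, ∀ q : ℂ, gb m m q = 1 := by
  intro m
  induction m with
  | zero => intro q; exact gb_zero 0 q
  | succ m ih => intro q; rw [gb_pascal, ih, gb_of_lt m (m+1) (by omega)]; ring

lemma gb_one : ∀ m k : ℕ, gb m k 1 = (Nat.choose m k : ℂ) := by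
  intro m
  induction m with
  | zero =>
    intro k
    cases k with
    | zero => simp [gb_zero]
    | succ k => simp [gb_of_lt 0 (k+1) (by omega)]
  | succ m ih =>
    intro k
    cases k with
    | zero => simp [gb_zero]
    | succ k =>
      rw [gb_pascal, ih, ih, one_pow, Nat.choose_succ_succ]
      push_cast; ring

lemma qInt_succ (q : ℂ) (m : ℕ) : qInt q (m+1) = qInt q m + q ^ m := Finset.sum_range_succ _ _

lemma qInt_add (q : ℂ) (a b : ℕ) : qInt q (a + b) = qInt q a + q ^ a * qInt q b := by
  induction b with
  | zero => simp [qInt]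
  | succ b ih => rw [← Nat.add_assoc, qInt_succ, ih, qInt_succ, pow_add]; ring

noncomputable def qfac (q : ℂ) : ℕ → ℂ
  | 0 => 1
  | m + 1 => qfac q m * qInt q (m + 1)

lemma gb_mul_qfac (q : ℂ) : ∀ m k : ℕ, k ≤ m →
    gb m k q * (qfac q k * qfac q (m - k)) = qfac q m := by
  intro m
  induction m with
  | zero => intro k hk; interval_cases k; simp [gb_zero, qfac]
  | succ m ih =>
    intro k hk
    cases k with
    | zero => simp [gb_zero, qfac]
    | succ k =>
      rcases Nat.lt_or_ge k m with hkm | hkm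
      · have h1 := ih k (by omega)
        have h2 := ih (k+1) (by omega)
        have e1 : qfac q (k+1) = qfac q k * qInt q (k+1) := rfl
        have e2 : m + 1 - (k+1) = m - k := by omega
        have e3 : qfac q (m - k) = qfac q (m - (k+1)) * qInt q (m - k) := by
          rw [show m - k = (m - (k+1)) + 1 from by omega, qfac,
            show m - (k+1) + 1 = m - k from by omega]
        have e4 : qfac q (m+1) = qfac q m * qInt q (m+1) := rfl
        have e5 : qInt q (m+1) = qInt q (k+1) + q^(k+1) * qInt q (m - k) := by
          rw [← qInt_add]; congr 1; omega
        rw [e3] at h1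
        rw [e1] at h2
        rw [gb_pascal, e2, e4, e5, e3, e1]
        linear_combination (qInt q (k+1)) * h1 + (q^(k+1) * qInt q (m-k)) * h2
      · have : k = m := by omega
        subst this
        rw [gb_self, Nat.sub_self]
        simp [qfac]

lemma qInt_ne_zero (q : ℂ) (j : ℕ) (hq : q ≠ 1) (hj : q ^ j ≠ 1) : qInt q j ≠ 0 := by
  intro h
  apply hj
  have h2 : qInt q j * (q - 1) = q ^ j - 1 := geom_sum_mul q j
  rw [h, zero_mul] at h2
  have := h2.symm
  rw [sub_eq_zero] at this
  exact this

lemma qfac_ne_zero (q : ℂ) (e : ℕ) (he : 2 ≤ e)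
    (hq2 : ∀ j, 0 < j → j < e → q ^ j ≠ 1) :
    ∀ r, r < e → qfac q r ≠ 0 := by
  have hq1 : q ≠ 1 := fun h => hq2 1 one_pos (by omega) (by rw [h, one_pow])
  intro r
  induction r with
  | zero => intro _; simp [qfac]
  | succ r ih =>
    intro hr
    exact mul_ne_zero (ih (by omega)) (qInt_ne_zero q (r+1) hq1 (hq2 (r+1) (by omega) hr))

lemma gb_root_zero (q : ℂ) (e : ℕ) (he : 2 ≤ e) (hq1 : q ^ e = 1)
    (hq2 : ∀ j, 0 < j → j < e → q ^ j ≠ 1) (r : ℕ) (h0 : 0 < r) (hr : r < e) :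
    gb e r q = 0 := by
  have hqne : q ≠ 1 := fun h => hq2 1 one_pos (by omega) (by rw [h, one_pow])
  have hInt : qInt q e = 0 := by
    have h2 : qInt q e * (q - 1) = q ^ e - 1 := geom_sum_mul q e
    rw [hq1, sub_self] at h2
    rcases mul_eq_zero.mp h2 with h | h
    · exact h
    · exact absurd (by rwa [sub_eq_zero] at h) hqne
  have hfe : qfac q e = 0 := by
    obtain ⟨e', rfl⟩ : ∃ e', e = e' + 1 := ⟨e - 1, by omega⟩
    rw [qfac, hInt, mul_zero]
  have key := gb_mul_qfac q e r (le_of_lt hr)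
  rw [hfe] at key
  rcases mul_eq_zero.mp key with h | h
  · exact h
  · exact absurd h (mul_ne_zero (qfac_ne_zero q e he hq2 r hr)
      (qfac_ne_zero q e he hq2 (e - r) (by omega)))

lemma succ_divmod (e m : ℕ) (he : 0 < e) :
    ((m % e + 1 < e → (m+1) % e = m % e + 1 ∧ (m+1) / e = m / e) ∧
     (m % e + 1 = e → (m+1) % e = 0 ∧ (m+1) / e = m / e + 1)) := by
  have hm := Nat.div_add_mod m e
  constructor
  · intro h
    constructor
    · rw [show m + 1 = (m % e + 1) + e * (m / e) from by omega, Nat.add_mul_mod_self_left,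
        Nat.mod_eq_of_lt h]
    · rw [show m + 1 = (m % e + 1) + e * (m / e) from by omega, Nat.add_mul_div_left _ _ he,
        Nat.div_eq_of_lt h, Nat.zero_add]
  · intro h
    have hx : e * (m / e + 1) = e * (m / e) + e := by ring
    constructor
    · rw [show m + 1 = e * (m / e + 1) from by omega, Nat.mul_mod_right]
    · rw [show m + 1 = e * (m / e + 1) from by omega, Nat.mul_div_cancel_left _ he]

lemma gb_lucas (q : ℂ) (e : ℕ) (he : 2 ≤ e) (hq1 : q ^ e = 1)
    (hq2 : ∀ j, 0 < j → j < e → q ^ j ≠ 1) :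
    ∀ m k : ℕ, gb m k q = (Nat.choose (m / e) (k / e) : ℂ) * gb (m % e) (k % e) q := by
  have he0 : 0 < e := by omega
  have hpow : ∀ t : ℕ, q ^ t = q ^ (t % e) := by
    intro t
    conv_lhs => rw [← Nat.mod_add_div t e]
    rw [pow_add, pow_mul, hq1, one_pow, mul_one]
  intro m
  induction m with
  | zero =>
    intro k
    cases k with
    | zero => simp [gb_zero]
    | succ k =>
      rw [gb_of_lt 0 (k+1) (by omega)]
      rcases Nat.eq_zero_or_pos ((k+1) % e) with h | h
      · have hpos : 0 < (k+1)/e := by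
          rcases Nat.eq_zero_or_pos ((k+1)/e) with h2 | h2
          · have hlt : k + 1 < e := (Nat.div_eq_zero_iff.mp h2).resolve_left (by omega)
            rw [Nat.mod_eq_of_lt hlt] at h
            omega
          · exact h2
        rw [Nat.zero_div, Nat.zero_mod, Nat.choose_eq_zero_of_lt hpos]
        simp
      · rw [Nat.zero_mod, gb_of_lt 0 _ h]
        ring
  | succ m ih =>
    intro k
    cases k with
    | zero => simp [gb_zero]
    | succ k =>
      have hb := Nat.mod_lt m he0
      have hr := Nat.mod_lt k he0
      have hsm := succ_divmod e m he0
      have hsk := succ_divmod e k he0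
      rw [gb_pascal, ih k, ih (k+1), hpow (k+1)]
      rcases Nat.lt_or_ge (m % e + 1) e with hbm | hbm
      · obtain ⟨hm1, hm2⟩ := hsm.1 hbm
        rcases Nat.lt_or_ge (k % e + 1) e with hkr | hkr
        · obtain ⟨hk1, hk2⟩ := hsk.1 hkr
          rw [hm1, hm2, hk1, hk2, gb_pascal (m%e) (k%e)]
          ring
        · have hke : k % e + 1 = e := by omega
          obtain ⟨hk1, hk2⟩ := hsk.2 hke
          rw [hm1, hm2, hk1, hk2, gb_of_lt (m%e) (k%e) (by omega) q, gb_zero, gb_zero,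
            pow_zero]
          ring
      · have hbe : m % e + 1 = e := by omega
        obtain ⟨hm1, hm2⟩ := hsm.2 hbe
        rcases Nat.lt_or_ge (k % e + 1) e with hkr | hkr
        · obtain ⟨hk1, hk2⟩ := hsk.1 hkr
          rw [hm1, hm2, hk1, hk2, gb_of_lt 0 (k%e+1) (by omega) q]
          have hp : gb (m%e + 1) (k%e+1) q
              = gb (m%e) (k%e) q + q^(k%e+1) * gb (m%e) (k%e+1) q := gb_pascal _ _ q
          have h0 : gb (m%e+1) (k%e+1) q = 0 := by
            rw [hbe]; exact gb_root_zero q e he hq1 hq2 _ (by omega) (by omega)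
          rw [hp] at h0
          linear_combination ((Nat.choose (m/e) (k/e) : ℂ)) * h0
        · have hke : k % e + 1 = e := by omega
          obtain ⟨hk1, hk2⟩ := hsk.2 hke
          have heq : k % e = m % e := by omega
          rw [hm1, hm2, hk1, hk2, heq, gb_self, gb_zero, gb_zero, pow_zero,
            Nat.choose_succ_succ]
          push_cast; ring

lemma divSuccHelper (d x : ℕ) (hd : 2 ≤ d) (hx : d ∣ x + 1) : x / d = (x+1)/d - 1 := by
  obtain ⟨t, ht⟩ := hx
  rcases t with _ | u
  · simp at ht
  · have ht' : x + 1 = d * u + d := by rw [ht]; ring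
    have h1 : (x+1)/d = u + 1 := by
      rw [ht, Nat.mul_div_cancel_left _ (by omega : 0 < d)]
    have h2 : x / d = u := by
      rw [show x = (d-1) + d*u from by omega, Nat.add_mul_div_left _ _ (by omega : 0 < d),
        Nat.div_eq_of_lt (by omega), Nat.zero_add]
    omega

lemma div_pred (d n : ℕ) (hd : 0 < d) (hnd : ¬ d ∣ n) : n / d = (n-1)/d := by
  have hm := Nat.div_add_mod n d
  have h0 : n % d ≠ 0 := fun h => hnd (Nat.dvd_of_mod_eq_zero h)
  have hlt : n % d < d := Nat.mod_lt _ hd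
  obtain ⟨r, hrr⟩ : ∃ r, n % d = r + 1 := ⟨n % d - 1, by omega⟩
  have key : n - 1 = r + d * (n / d) := by
    generalize d * (n / d) = u at hm
    omega
  rw [key, Nat.add_mul_div_left _ _ hd, Nat.div_eq_of_lt (by omega : r < d)]
  exact (Nat.zero_add _).symm

lemma mod_helper (d a k : ℕ) (hd : 2 ≤ d) (hda : d ∣ a + 1) (hk : k % d ≠ 0) :
    (a + k) % d = k % d - 1 := by
  obtain ⟨u, hu⟩ := hda
  have hmk := Nat.div_add_mod k d
  have hlt : k % d < d := Nat.mod_lt _ (by omega)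
  have hdist : d * (u + k/d) = d * u + d * (k/d) := by ring
  obtain ⟨r, hrr⟩ : ∃ r, k % d = r + 1 := ⟨k % d - 1, by omega⟩
  rw [show a + k = r + d * (u + k/d) from by omega, Nat.add_mul_mod_self_left,
    Nat.mod_eq_of_lt (by omega)]
  omega

/-- For `d ≥ 2` a divisor of `2sn+2` and `ω` a primitive `d`-th root of
unity, the value of `[[sn+k,k]]_{ω²}·[[n,k]]_{ω²}` is given by the following case
distinction. -/
theorem stmt11 (s n k d : ℕ) (hs : 0 < s) (hn : 0 < n) (hk : k ≤ n)
    (hd : 2 ≤ d) (hdvd : d ∣ (2 * s * n + 2)) (ω : ℂ)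
    (hω1 : ω ^ d = 1) (hω2 : ∀ e : ℕ, 0 < e → e < d → ω ^ e ≠ 1) :
    gb (s * n + k) k (ω ^ 2) * gb n k (ω ^ 2)
      = if d = 2 then
          ((Nat.choose (s * n + k) k * Nat.choose n k : ℕ) : ℂ)
        else if Odd d ∧ d ∣ k then
          ((Nat.choose ((s * n + 1 + k) / d - 1) (k / d) *
            Nat.choose ((n - 1) / d) (k / d) : ℕ) : ℂ)
        else if Even d ∧ d ∣ 2 * k then
          ((Nat.choose ((2 * s * n + 2 + 2 * k) / d - 1) (2 * k / d) *
            Nat.choose (2 * (n - 1) / d) (2 * k / d) : ℕ) : ℂ)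
        else 0 := by
  have hdvd_of : ∀ t : ℕ, ω ^ t = 1 → d ∣ t := by
    intro t ht
    have hlt : t % d < d := Nat.mod_lt _ (by omega)
    rw [← Nat.mod_add_div t d, pow_add, pow_mul, hω1, one_pow, mul_one] at ht
    rcases Nat.eq_zero_or_pos (t % d) with h0 | h0
    · exact Nat.dvd_of_mod_eq_zero h0
    · exact absurd ht (hω2 _ h0 hlt)
  by_cases hd2 : d = 2
  · subst hd2
    rw [if_pos rfl, hω1, gb_one, gb_one]
    push_cast; ring
  · rw [if_neg hd2]
    rcases Nat.even_or_odd d with hev | hodd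
    · -- Even d, d ≠ 2, so d ≥ 4
      rw [if_neg (fun h => (Nat.not_odd_iff_even.mpr hev) h.1)]
      obtain ⟨e, hde⟩ : ∃ e, d = 2 * e := by rcases hev with ⟨t, ht⟩; exact ⟨t, by omega⟩
      have he2 : 2 ≤ e := by omega
      have hsn : e ∣ s * n + 1 := by
        obtain ⟨t, ht⟩ := hdvd
        refine ⟨t, ?_⟩
        have h1 : 2 * (s * n) + 2 = 2 * (e * t) := by rw [show 2 * (s * n) + 2 = 2 * s * n + 2 from by ring, ht, hde]; ring
        omega
      have hq1 : (ω ^ 2) ^ e = 1 := by rw [← pow_mul, ← hde, hω1]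
      have hq2 : ∀ j, 0 < j → j < e → (ω ^ 2) ^ j ≠ 1 := by
        intro j hj1 hj2 h
        rw [← pow_mul] at h
        obtain ⟨c, hc⟩ := hdvd_of _ h
        have h2 : d * c = 2 * (e * c) := by rw [hde]; ring
        have h3 : j = e * c := by omega
        have h4 : 1 ≤ c := by
          rcases Nat.eq_zero_or_pos c with rfl | h5
          · rw [Nat.mul_zero] at h3; omega
          · exact h5
        have h6 : e * 1 ≤ e * c := Nat.mul_le_mul_left e h4
        omega
      have lucas := gb_lucas (ω ^ 2) e he2 hq1 hq2
      have hndvd : ¬ e ∣ n := by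
        intro h
        have h2 : e ∣ s * n := Dvd.dvd.mul_left h s
        have h3 : e ∣ (s * n + 1) - s * n := Nat.dvd_sub hsn h2
        rw [show s * n + 1 - s * n = 1 from by omega] at h3
        have := Nat.le_of_dvd one_pos h3
        omega
      by_cases hke : e ∣ k
      · have hdk : d ∣ 2 * k := by
          obtain ⟨c, hc⟩ := hke
          exact ⟨c, by rw [hde, hc]; ring⟩
        rw [if_pos ⟨hev, hdk⟩]
        have hk0 : k % e = 0 := by obtain ⟨c, rfl⟩ := hke; exact Nat.mul_mod_right e c
        rw [lucas (s*n+k) k, lucas n k, hk0, gb_zero, gb_zero, mul_one, mul_one]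
        have e1 : (s*n+k)/e = (2*s*n+2+2*k)/d - 1 := by
          rw [show 2*s*n+2+2*k = 2*(s*n+1+k) from by ring, hde,
            Nat.mul_div_mul_left _ _ (by omega : 0 < 2)]
          have h5 := divSuccHelper e (s*n+k) he2
            (by rw [show s*n+k+1 = s*n+1+k from by omega]; exact dvd_add hsn hke)
          rw [h5, show s*n+k+1 = s*n+1+k from by omega]
        have e2 : k / e = 2*k / d := by
          rw [hde, Nat.mul_div_mul_left _ _ (by omega : 0 < 2)]
        have e3 : n / e = 2*(n-1)/d := by
          rw [hde, Nat.mul_div_mul_left _ _ (by omega : 0 < 2)]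
          exact div_pred e n (by omega) hndvd
        rw [e1, e2, e3]
        push_cast; ring
      · have hnd2k : ¬ (Even d ∧ d ∣ 2 * k) := by
          rintro ⟨-, c, hc⟩
          apply hke
          refine ⟨c, ?_⟩
          have h2 : d * c = 2 * (e * c) := by rw [hde]; ring
          omega
        rw [if_neg hnd2k]
        have hkm : k % e ≠ 0 := fun h => hke (Nat.dvd_of_mod_eq_zero h)
        have hmod : (s*n + k) % e = k % e - 1 := mod_helper e (s*n) k he2 hsn hkm
        rw [lucas (s*n+k) k, hmod, gb_of_lt (k % e - 1) (k % e) (by omega) _]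
        ring
    · -- Odd d
      have hd3 : 3 ≤ d := by rcases hodd with ⟨t, ht⟩; omega
      have hcop : Nat.Coprime d 2 := Nat.coprime_two_right.mpr hodd
      have hsn : d ∣ s * n + 1 := by
        apply hcop.dvd_of_dvd_mul_right
        rw [show (s * n + 1) * 2 = 2 * s * n + 2 from by ring]
        exact hdvd
      have hq1 : (ω ^ 2) ^ d = 1 := by
        rw [← pow_mul, mul_comm, pow_mul, hω1, one_pow]
      have hq2 : ∀ j, 0 < j → j < d → (ω ^ 2) ^ j ≠ 1 := by
        intro j hj1 hj2 h
        rw [← pow_mul] at h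
        have h2 : d ∣ 2 * j := hdvd_of _ h
        rw [mul_comm] at h2
        have h3 : d ∣ j := hcop.dvd_of_dvd_mul_right h2
        have := Nat.le_of_dvd hj1 h3
        omega
      have lucas := gb_lucas (ω ^ 2) d (by omega) hq1 hq2
      have hndvd : ¬ d ∣ n := by
        intro h
        have h2 : d ∣ s * n := Dvd.dvd.mul_left h s
        have h3 : d ∣ (s * n + 1) - s * n := Nat.dvd_sub hsn h2
        rw [show s * n + 1 - s * n = 1 from by omega] at h3
        have := Nat.le_of_dvd one_pos h3
        omega
      by_cases hkd : d ∣ k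
      · rw [if_pos ⟨hodd, hkd⟩]
        have hk0 : k % d = 0 := by obtain ⟨c, rfl⟩ := hkd; exact Nat.mul_mod_right d c
        rw [lucas (s*n+k) k, lucas n k, hk0, gb_zero, gb_zero, mul_one, mul_one]
        have e1 : (s*n+k)/d = (s*n+1+k)/d - 1 := by
          have h5 := divSuccHelper d (s*n+k) (by omega)
            (by rw [show s*n+k+1 = s*n+1+k from by omega]; exact dvd_add hsn hkd)
          rw [h5, show s*n+k+1 = s*n+1+k from by omega]
        have e2 : n / d = (n-1)/d := div_pred d n (by omega) hndvd
        rw [e1, e2]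
        push_cast; ring
      · rw [if_neg (fun h => hkd h.2)]
        rw [if_neg (fun h => (Nat.not_even_iff_odd.mpr hodd) h.1)]
        have hkm : k % d ≠ 0 := fun h => hkd (Nat.dvd_of_mod_eq_zero h)
        have hmod : (s*n + k) % d = k % d - 1 := mod_helper d (s*n) k (by omega) hsn hkm
        rw [lucas (s*n+k) k, hmod, gb_of_lt (k % d - 1) (k % d) (by omega) _]
        ring
end
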